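/- arXiv:math/9906201 — 3 statements merged into one kernel-verified Lean document; each statement's English description precedes it below -/
import Mathlib

section
/- Let 0 → I → A →^π B → 0 be an extension of C*-algebras and let e, f be projections in A. Then π(e) is Cuntz subequivalent to π(f) in B if and only if there exists a positive element x ∈ I such that e is Cuntz subequivalent to f ⊕ x in M₂(A). -/
/-!
If `π e ≲ π f`, choose `r` with `‖r (π f) r* - π e‖ < 1`. In the corner of `π e`, the compression
`z` of `r (π f) r*` satisfies `‖z - π e‖ < 1`, so `u = 1 - π e + z` is strictly positive and
`u^(-1/2)`, which commutes with `π e`, conjugates `z` onto `π e`. This yields a partial isometry `v`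
with `v* v = π e` and range under `π f`; lift it to `a ∈ f A e`. Then `d = e - a* a` lies in the
ideal, and for `x = e d₊ e` the element `c = a* a + x` dominates `e` in the corner `eAe`, so the
same normalisation gives `w` with `w c w* = e`, and the row `(w a*, w e)` conjugates `f ⊕ x`
exactly onto `e ⊕ 0`. Conversely, the `(0, 0)` entry of `r (f ⊕ x) r*` is
`r₀₀ f r₀₀* + r₀₁ x r₀₁*`, and `π` kills the second term.
-/

open Filter Topology

/-- Cuntz subequivalence: `a ≲ b` iff there is a sequence `(r j)` with
`r j * b * (r j)* → a`. -/
def CuntzSub {R : Type*} [Mul R] [Star R] [TopologicalSpace R] (a b : R) : Prop :=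
  ∃ r : ℕ → R, Tendsto (fun j => r j * b * star (r j)) atTop (𝓝 a)

/-- A projection in a C*-algebra: a self-adjoint idempotent. -/
def IsCProjection {A : Type*} [NonUnitalCStarAlgebra A] (p : A) : Prop :=
  star p = p ∧ p * p = p

/-- A positive element of a C*-algebra, characterized as `x = y*y`. -/
def IsPositive {A : Type*} [NonUnitalCStarAlgebra A] (x : A) : Prop :=
  ∃ y : A, x = star y * y

open Unitization
open scoped CStarAlgebra

open CFC in
theorem exists_conj_eq_of_isStrictlyPositive {C : Type*} [CStarAlgebra C] [PartialOrder C]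
    [StarOrderedRing C] {e c : C} (he : IsIdempotentElem e) (hec : e * c = c) (hce : c * e = c)
    (hu : IsStrictlyPositive (1 - e + c)) :
    ∃ y : C, IsSelfAdjoint y ∧ Commute e y ∧ y * c * y = e := by
  set u := 1 - e + c
  have heu : e * u = c := by
    simp only [u, mul_add, mul_sub, mul_one, he.eq, hec, sub_self, zero_add]
  have hue : u * e = c := by
    simp only [u, add_mul, sub_mul, one_mul, he.eq, hce, sub_self, zero_add]
  set y := u ^ (-(1 / 2) : ℝ)
  have hyuy : y * u * y = 1 := by
    rw [← rpow_one u hu.nonneg, ← rpow_add hu.isUnit, ← rpow_add hu.isUnit]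
    norm_num [rpow_zero u hu.nonneg]
  have hey : Commute e y := (Commute.cfc_nnreal (heu.trans hue.symm).symm _).symm
  refine ⟨y, rpow_nonneg.isSelfAdjoint, hey, ?_⟩
  calc y * c * y = y * u * y * e := by
        rw [← hue, ← mul_assoc, mul_assoc (y * u), hey.eq, ← mul_assoc]
    _ = e := by rw [hyuy, one_mul]

theorem isStrictlyPositive_one_sub_add_of_norm_sub_lt {C : Type*} [CStarAlgebra C]
    [PartialOrder C] [StarOrderedRing C] {e c : C} (he : IsStarProjection e) (hc : 0 ≤ c)
    (hce : ‖c - e‖ < 1) : IsStrictlyPositive (1 - e + c) := by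
  refine ⟨add_nonneg he.one_sub_nonneg hc, ?_⟩
  have h : ‖1 - (1 - e + c)‖ < 1 := by
    rwa [sub_add_eq_sub_sub, sub_sub_cancel, ← norm_neg, neg_sub]
  simpa using (Units.oneSub _ h).isUnit

-- `A` carries no order in Mathlib, so positivity is argued in `A⁺¹` (with its spectral order).
theorem exists_corner_conj_eq {A : Type*} [NonUnitalCStarAlgebra A] [PartialOrder A⁺¹]
    [StarOrderedRing A⁺¹] {e c : A} (he : IsStarProjection e) (hec : e * c = c) (hce : c * e = c)
    (hu : IsStrictlyPositive (1 - (e : A⁺¹) + c)) :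
    ∃ w : A, IsSelfAdjoint w ∧ e * w = w ∧ w * c * w = e := by
  obtain ⟨y, hy, hey, hycy⟩ :=
    exists_conj_eq_of_isStrictlyPositive (he.isIdempotentElem.inr (R := ℂ))
      (by rw [← inr_mul ℂ, hec]) (by rw [← inr_mul ℂ, hce]) hu
  have hw : (((e : A⁺¹) * y).snd : A⁺¹) = e * y := by
    conv_rhs => rw [← inl_fst_add_inr_snd_eq ((e : A⁺¹) * y)]
    simp [fst_mul]
  refine ⟨((e : A⁺¹) * y).snd, ?_, ?_, ?_⟩ <;> apply inr_injective (R := ℂ)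
  · rw [inr_star, hw, star_mul, hy.star_eq, ← inr_star, he.isSelfAdjoint.star_eq, hey.eq]
  · rw [inr_mul, hw, ← mul_assoc, ← inr_mul, he.isIdempotentElem.eq]
  · rw [inr_mul, inr_mul, hw]
    calc (e : A⁺¹) * y * c * (e * y) = e * (y * (c * e) * y) := by
          simp only [mul_assoc]
      _ = e := by rw [← inr_mul, hce, hycy, ← inr_mul, he.isIdempotentElem.eq]

theorem exists_partialIsometry_of_norm_sub_lt {B : Type*} [NonUnitalCStarAlgebra B] {p q r : B}
    (hp : IsStarProjection p) (hq : IsStarProjection q) (h : ‖r * q * star r - p‖ < 1) :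
    ∃ v : B, star v * v = p ∧ q * v = v ∧ v * p = v := by
  let _ := CStarAlgebra.spectralOrder B⁺¹
  let _ := CStarAlgebra.spectralOrderedRing B⁺¹
  have hp2 := hp.isIdempotentElem.eq
  have hq2 := hq.isIdempotentElem.eq
  set b := q * star r * p
  set z := star b * b
  have hz : z = p * (r * q * star r) * p := by
    simp only [z, b, star_mul, star_star, hp.isSelfAdjoint.star_eq, hq.isSelfAdjoint.star_eq,
      mul_assoc]
    rw [← mul_assoc q q, hq2]
  have hpz : p * z = z := by rw [hz, ← mul_assoc, ← mul_assoc, hp2]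
  have hzp : z * p = z := by rw [hz, mul_assoc, hp2]
  have hzp_norm : ‖z - p‖ < 1 := by
    have hsub : z - p = p * (r * q * star r - p) * p := by
      rw [hz, mul_sub, sub_mul, hp2, hp2]
    calc ‖z - p‖ ≤ ‖p‖ * ‖r * q * star r - p‖ * ‖p‖ := hsub ▸ norm_mul₃_le
      _ ≤ 1 * ‖r * q * star r - p‖ * 1 := by
          gcongr <;> exact hp.norm_le
      _ < 1 := by simpa using h
  have hpos : IsStrictlyPositive (1 - (p : B⁺¹) + z) :=
    isStrictlyPositive_one_sub_add_of_norm_sub_lt (hp.inr (R := ℂ))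
      (by simpa only [z, inr_mul, inr_star] using star_mul_self_nonneg (b : B⁺¹))
      (by rwa [← inr_sub, norm_inr])
  obtain ⟨w, hw, hpw, hwzw⟩ := exists_corner_conj_eq hp hpz hzp hpos
  have hwp : w * p = w := by
    simpa only [star_mul, hw.star_eq, hp.isSelfAdjoint.star_eq] using congr_arg star hpw
  refine ⟨b * w, ?_, ?_, ?_⟩
  · simpa only [star_mul, hw.star_eq, z, mul_assoc] using hwzw
  · simp only [b, ← mul_assoc, hq2]
  · rw [mul_assoc, hwp]

theorem exists_conj_eq_star_mul_self_add {A : Type*} [NonUnitalCStarAlgebra A] {e a s t : A}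
    (he : IsStarProjection e) (ha : a * e = a) (ht : IsSelfAdjoint t)
    (hd : e - star a * a = s - t * t) :
    ∃ w : A, w * (star a * a + e * s * e) * star w = e := by
  let _ := CStarAlgebra.spectralOrder A⁺¹
  let _ := CStarAlgebra.spectralOrderedRing A⁺¹
  have he2 := he.isIdempotentElem.eq
  have hea : e * star a = star a := by rw [← he.isSelfAdjoint.star_eq, ← star_mul, ha]
  set c := star a * a + e * s * e
  have hec : e * c = c := by simp only [c, mul_add, ← mul_assoc, hea, he2]
  have hce : c * e = c := by simp only [c, add_mul, mul_assoc, ha, he2]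
  have hcut : c - e = star (t * e) * (t * e) := by
    have hd' : e * (e - star a * a) * e = e - star a * a := by
      rw [mul_sub, sub_mul, he2, he2, ← mul_assoc, hea, mul_assoc, ha]
    rw [star_mul, ht.star_eq, he.isSelfAdjoint.star_eq]
    calc c - e = e * s * e - e * (e - star a * a) * e := by rw [hd']; simp only [c]; abel
      _ = e * t * (t * e) := by rw [hd]; noncomm_ring
  have hpos : IsStrictlyPositive (1 - (e : A⁺¹) + c) := by
    have h : 1 - (e : A⁺¹) + c = 1 + star ((t * e : A) : A⁺¹) * (t * e : A) := by
      rw [← inr_star, ← inr_mul, ← hcut, inr_sub]; abel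
    exact h ▸ isStrictlyPositive_one.add_nonneg (star_mul_self_nonneg _)
  obtain ⟨w, hw, -, hwcw⟩ := exists_corner_conj_eq he hec hce hpos
  exact ⟨w, by rwa [hw.star_eq]⟩

theorem IsSelfAdjoint.exists_eq_mul_self_sub_mul_self {A B : Type*} [NonUnitalCStarAlgebra A]
    [NonUnitalCStarAlgebra B] {d : A} (hd : IsSelfAdjoint d) (π : A →⋆ₙₐ[ℂ] B) (hπd : π d = 0) :
    ∃ s t : A, IsSelfAdjoint s ∧ IsSelfAdjoint t ∧ d = s * s - t * t ∧ π s = 0 := by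
  refine ⟨cfcₙ (fun x : ℝ ↦ √(max x 0)) d, cfcₙ (fun x : ℝ ↦ √(max (-x) 0)) d,
    cfcₙ_predicate _ d, cfcₙ_predicate _ d, ?_, ?_⟩
  · rw [← cfcₙ_mul _ _ d, ← cfcₙ_mul _ _ d, ← cfcₙ_sub _ _ d]
    conv_lhs => rw [← cfcₙ_id' ℝ d]
    refine cfcₙ_congr fun x _ ↦ ?_
    simp only [Real.mul_self_sqrt (le_max_right _ _)]
    rcases le_total x 0 with hx | hx <;> simp [hx]
  · rw [π.map_cfcₙ _ d (hφ := map_continuous π), hπd, cfcₙ_apply_zero]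

section Matrix

variable {A : Type*} [NonUnitalSemiring A] [StarRing A] [TopologicalSpace A]

theorem cuntzSub_diagonal_of_eq_add {a b c r₀ r₁ : A}
    (h : r₀ * b * star r₀ + r₁ * c * star r₁ = a) :
    CuntzSub (Matrix.diagonal ![a, 0]) (Matrix.diagonal ![b, c]) := by
  refine ⟨fun _ ↦ Matrix.of ![![r₀, r₁], ![0, 0]], tendsto_const_nhds.congr fun _ ↦ ?_⟩
  ext i j
  fin_cases i <;> fin_cases j <;>
    simp [← h, Matrix.mul_apply, Fin.sum_univ_two, Matrix.star_apply, Matrix.vecMul, dotProduct,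
      mul_assoc]

theorem CuntzSub.map_of_diagonal {B : Type*} [NonUnitalSemiring B] [StarRing B]
    [TopologicalSpace B] {F : Type*} [FunLike F A B]
    [NonUnitalRingHomClass F A B] [StarHomClass F A B] [ContinuousMapClass F A B] (π : F)
    {a b c : A} (h : CuntzSub (Matrix.diagonal ![a, 0]) (Matrix.diagonal ![b, c]))
    (hc : π c = 0) : CuntzSub (π a) (π b) := by
  obtain ⟨r, hr⟩ := h
  refine ⟨fun j ↦ π (r j 0 0), ?_⟩
  have h00 : Tendsto (fun j ↦ π ((r j * Matrix.diagonal ![b, c] * star (r j)) 0 0)) atTop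
      (𝓝 (π (Matrix.diagonal ![a, 0] 0 0))) :=
    ((map_continuous π).tendsto _).comp (((continuous_id.matrix_elem 0 0).tendsto _).comp hr)
  convert h00 using 2 with j
  · simp [Matrix.mul_apply, Fin.sum_univ_two, Matrix.star_apply, hc, map_star]
  · simp

end Matrix

theorem exists_cuntzSub_diagonal_of_partialIsometry {A B : Type*} [NonUnitalCStarAlgebra A]
    [NonUnitalCStarAlgebra B] (π : A →⋆ₙₐ[ℂ] B) (hπ : Function.Surjective π) {e f : A}
    (he : IsStarProjection e) (hf : IsStarProjection f) {v : B} (hv : star v * v = π e)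
    (hfv : π f * v = v) (hve : v * π e = v) :
    ∃ x : A, IsPositive x ∧ π x = 0 ∧
      CuntzSub (Matrix.diagonal ![e, 0] : Matrix (Fin 2) (Fin 2) A) (Matrix.diagonal ![f, x]) := by
  obtain ⟨a, rfl⟩ := hπ v
  have he2 := he.isIdempotentElem.eq
  set a₁ := f * a * e
  have hπa₁ : π a₁ = π a := by rw [map_mul, map_mul, hfv, hve]
  have ha₁e : a₁ * e = a₁ := by rw [mul_assoc, he2]
  have hfa₁ : f * a₁ = a₁ := by simp only [a₁, ← mul_assoc, hf.isIdempotentElem.eq]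
  have hd : IsSelfAdjoint (e - star a₁ * a₁) := he.isSelfAdjoint.sub (.star_mul_self a₁)
  obtain ⟨s, t, hs, ht, hdst, hπs⟩ := hd.exists_eq_mul_self_sub_mul_self π
    (by rw [map_sub, map_mul, map_star, hπa₁, hv, sub_self])
  obtain ⟨w, hw⟩ := exists_conj_eq_star_mul_self_add he ha₁e ht hdst
  refine ⟨e * (s * s) * e, ⟨s * e, ?_⟩, by simp [hπs], cuntzSub_diagonal_of_eq_add
    (r₀ := w * star a₁) (r₁ := w * e) ?_⟩
  · rw [star_mul, hs.star_eq, he.isSelfAdjoint.star_eq]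
    simp only [mul_assoc]
  · calc _ = w * (star a₁ * (f * a₁) + e * e * (s * s) * (e * e)) * star w := by
          simp only [star_mul, star_star, he.isSelfAdjoint.star_eq]
          noncomm_ring
      _ = e := by rw [hfa₁, he2, hw]

theorem stmt1_general {A B : Type*} [NonUnitalCStarAlgebra A] [NonUnitalCStarAlgebra B]
    (π : A →⋆ₙₐ[ℂ] B) (hπ : Function.Surjective π)
    (e f : A) (he : IsCProjection e) (hf : IsCProjection f) :
    CuntzSub (π e) (π f) ↔
      ∃ x : A, IsPositive x ∧ π x = 0 ∧
        CuntzSub (Matrix.diagonal ![e, 0] : Matrix (Fin 2) (Fin 2) A)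
          (Matrix.diagonal ![f, x]) := by
  have he' : IsStarProjection e := ⟨he.2, he.1⟩
  have hf' : IsStarProjection f := ⟨hf.2, hf.1⟩
  constructor
  · rintro ⟨r, hr⟩
    obtain ⟨j, hj⟩ := (hr.eventually (Metric.ball_mem_nhds _ one_pos)).exists
    rw [dist_eq_norm] at hj
    obtain ⟨v, hv, hfv, hve⟩ := exists_partialIsometry_of_norm_sub_lt (he'.map π) (hf'.map π) hj
    exact exists_cuntzSub_diagonal_of_partialIsometry π hπ he' hf' hv hfv hve
  · rintro ⟨x, -, hπx, h⟩
    exact h.map_of_diagonal π hπx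

/-- for an extension `0 → I → A →π B → 0` of C*-algebras and
projections `e`, `f` in `A`: `π e ≲ π f` in `B` if and only if there is a
positive `x ∈ I = ker π` with `e ≲ f ⊕ x` in `M₂(A)`. -/
theorem stmt1 {A B : Type*} [NonUnitalCStarAlgebra A] [NonUnitalCStarAlgebra B]
    (π : A →⋆ₙₐ[ℂ] B) (hπ : Function.Surjective π) (hcont : Continuous π)
    (e f : A) (he : IsCProjection e) (hf : IsCProjection f) :
    CuntzSub (π e) (π f) ↔
      ∃ x : A, IsPositive x ∧ π x = 0 ∧
        CuntzSub (Matrix.diagonal ![e, 0] : Matrix (Fin 2) (Fin 2) A)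
          (Matrix.diagonal ![f, x]) :=
  stmt1_general π hπ e f he hf
end

section
/- Let E be a finite directed graph with no cycles and let τ: E⁰ → ℝ₊ be a graph-trace, i.e., τ(v) = Σ_{e: s(e)=v} τ(r(e)) for every vertex v emitting at least one edge. Then for every vertex v ∈ E⁰, τ(v) = Σ_{i=1}^{k} n_{v_i} τ(v_i), where v_1, ..., v_k are the sinks of E and n_{v_i} is the number of finite paths from v to v_i (counting the empty path when v = v_i). -/
open Finset

/-- `IsPathFrom s r v w l`: the list of edges `l` is a path from vertex `v` to
vertex `w` (the empty list is a path from `v` to `v`). -/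
def IsPathFrom {V E : Type*} (s r : E → V) (v w : V) : List E → Prop
  | [] => v = w
  | e :: l => s e = v ∧ IsPathFrom s r (r e) w l

/-! Path counts obey the same recursion as a graph-trace: a path from `v` is either empty or an
edge out of `v` followed by a path from its range, so `N(v, w) = [v = w] + Σ_{s e = v} N(r e, w)`.
On a finite acyclic graph the relation "`w` is the range of an edge out of `v`" is well-founded,
and induction along it gives the formula, the sinks being the base case. -/

section Paths

variable {V E : Type*} (s r : E → V)

def Follows (w v : V) : Prop := ∃ e : E, s e = v ∧ r e = w

variable {s r}

lemma exists_isPathFrom_of_transGen {w v : V} (h : Relation.TransGen (Follows s r) w v) :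
    ∃ l : List E, l ≠ [] ∧ IsPathFrom s r v w l := by
  induction h with
  | single h =>
      obtain ⟨e, hs, hr⟩ := h
      exact ⟨[e], List.cons_ne_nil _ _, hs, hr⟩
  | tail _ h ih =>
      obtain ⟨e, hs, hr⟩ := h
      obtain ⟨l, -, hl⟩ := ih
      exact ⟨e :: l, List.cons_ne_nil _ _, hs, hr ▸ hl⟩

lemma wellFounded_follows [Finite V]
    (hnocycle : ∀ (v : V) (l : List E), l ≠ [] → ¬ IsPathFrom s r v v l) :
    WellFounded (Follows s r) := by
  have : IsTrans V (Relation.TransGen (Follows s r)) := ⟨fun _ _ _ => .trans⟩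
  have : Std.Irrefl (Relation.TransGen (Follows s r)) := ⟨fun v hv => by
    obtain ⟨l, hne, hl⟩ := exists_isPathFrom_of_transGen hv
    exact hnocycle v l hne hl⟩
  exact (Finite.wellFounded_of_trans_of_irrefl _).mono fun _ _ => Relation.TransGen.single

variable (s r)

def pathsEquiv (v w : V) :
    {l // IsPathFrom s r v w l} ≃
      PLift (v = w) ⊕ Σ e : {e // s e = v}, {l // IsPathFrom s r (r e) w l} where
  toFun
    | ⟨[], h⟩ => .inl ⟨h⟩
    | ⟨e :: l, h⟩ => .inr ⟨⟨e, h.1⟩, ⟨l, h.2⟩⟩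
  invFun
    | .inl ⟨h⟩ => ⟨[], h⟩
    | .inr ⟨⟨e, he⟩, ⟨l, hl⟩⟩ => ⟨e :: l, he, hl⟩
  left_inv := by rintro ⟨_ | _, _⟩ <;> rfl
  right_inv := by rintro (_ | ⟨⟨_, _⟩, ⟨_, _⟩⟩) <;> rfl

variable {s r}

lemma finite_paths [Finite E] (hwf : WellFounded (Follows s r)) (v w : V) :
    Finite {l // IsPathFrom s r v w l} := by
  induction v using hwf.induction with
  | _ v ih =>
    have : ∀ e : {e // s e = v}, Finite {l // IsPathFrom s r (r e) w l} :=
      fun e => ih _ ⟨e, e.2, rfl⟩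
    exact .of_equiv _ (pathsEquiv s r v w).symm

lemma card_paths [Fintype E] [DecidableEq V] {v w : V}
    (hfin : ∀ e : E, Finite {l // IsPathFrom s r (r e) w l}) :
    Nat.card {l // IsPathFrom s r v w l} =
      (if v = w then 1 else 0) +
        ∑ e ∈ univ.filter (fun e => s e = v), Nat.card {l // IsPathFrom s r (r e) w l} := by
  rw [Nat.card_congr (pathsEquiv s r v w), Nat.card_sum, Nat.card_sigma,
    ← Finset.sum_subtype_eq_sum_filter, Finset.subtype_univ]
  split_ifs with h <;> simp [h]

lemma sum_sinks_card_paths_mul [Fintype V] [Fintype E] [DecidableEq V]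
    (hfin : ∀ v w : V, Finite {l // IsPathFrom s r v w l}) (τ : V → ℝ) (v : V) :
    ∑ w ∈ univ.filter (fun w => ∀ e : E, s e ≠ w),
        (Nat.card {l // IsPathFrom s r v w l} : ℝ) * τ w =
      (if ∀ e : E, s e ≠ v then τ v else 0) +
        ∑ e ∈ univ.filter (fun e => s e = v), ∑ w ∈ univ.filter (fun w => ∀ e : E, s e ≠ w),
          (Nat.card {l // IsPathFrom s r (r e) w l} : ℝ) * τ w := by
  have hcard (w : V) : (Nat.card {l // IsPathFrom s r v w l} : ℝ) = (if v = w then 1 else 0) +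
      ∑ e ∈ univ.filter (fun e => s e = v), (Nat.card {l // IsPathFrom s r (r e) w l} : ℝ) := by
    exact_mod_cast card_paths fun e => hfin (r e) w
  simp only [hcard, add_mul, sum_add_distrib, ite_mul, one_mul, zero_mul, sum_ite_eq, sum_mul,
    mem_filter, mem_univ, true_and]
  rw [sum_comm]

end Paths

theorem stmt6_general {V E : Type*} [Fintype V] [Fintype E] [DecidableEq V]
    (s r : E → V)
    (hnocycle : ∀ (v : V) (l : List E), l ≠ [] → ¬ IsPathFrom s r v v l)
    (τ : V → ℝ)
    (htrace : ∀ v : V, (∃ e : E, s e = v) →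
      τ v = ∑ e ∈ univ.filter (fun e => s e = v), τ (r e)) :
    ∀ v : V,
      τ v = ∑ w ∈ univ.filter (fun w => ∀ e : E, s e ≠ w),
        (Nat.card {l : List E // IsPathFrom s r v w l}) * τ w := by
  have hwf := wellFounded_follows hnocycle
  intro v
  induction v using hwf.induction with
  | _ v ih =>
    rw [sum_sinks_card_paths_mul (finite_paths hwf) τ v]
    by_cases hv : ∃ e, s e = v
    · rw [if_neg (by simpa using hv), zero_add, htrace v hv]
      exact sum_congr rfl fun e he => ih _ ⟨e, (mem_filter.1 he).2, rfl⟩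
    · push Not at hv
      rw [if_pos hv, filter_false_of_mem fun e _ => hv e, sum_empty, add_zero]

/-- let `E` be a finite directed graph with no cycles and let `τ`
be a (nonnegative real-valued) graph-trace.  Then for every vertex `v`,
`τ v = Σ_{sinks w} (number of paths from v to w) * τ w`, where the empty path
is counted when `v = w`. -/
theorem stmt6 {V E : Type*} [Fintype V] [Fintype E] [DecidableEq V] [DecidableEq E]
    (s r : E → V)
    (hnocycle : ∀ (v : V) (l : List E), l ≠ [] → ¬ IsPathFrom s r v v l)
    (τ : V → ℝ) (hpos : ∀ v, 0 ≤ τ v)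
    (htrace : ∀ v : V, (∃ e : E, s e = v) →
      τ v = ∑ e ∈ univ.filter (fun e => s e = v), τ (r e)) :
    ∀ v : V,
      τ v = ∑ w ∈ univ.filter (fun w => ∀ e : E, s e ≠ w),
        (Nat.card {l : List E // IsPathFrom s r v w l}) * τ w :=
  stmt6_general s r hnocycle τ htrace
end

section
/- Let E be a locally finite directed graph with no sinks, and suppose that every vertex of E⁰ connects to a cycle having an exit in every subgraph (F, {e : r(e) ∈ F}) where F is the complement of a hereditary and saturated subset of E⁰. Then for every vertex v ∈ E⁰, the projection P_v ∈ C*(E) is properly infinite. -/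
/-!
Fix `v`. Iterating the Cuntz–Krieger relation writes `P v` as the orthogonal sum of the range
projections `S_μ S_μ*` over the paths `μ` of length `n` out of `v`. The hypothesis, applied to the
hereditary saturated set of vertices all of whose long paths end below a cycle, yields an `n` for
which the end of every such `μ` is reachable from a cycle vertex `x` that is itself the end of
another path `π` of length `n`. Applied to the set of vertices that cannot reach `x`, it yields two
cycles at `x` leaving along different edges, so `P x` and with it `S_π S_π*` is properly infinite,
while `S_μ S_μ* ≾ S_π S_π*`. Distributing infinitely many orthogonal copies of each such properly
infinite summand over the summands below it gives two orthogonal copies of `P v`.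
-/

open Filter Topology

/-- A Cuntz–Krieger `E`-family in a C*-algebra `R` for the directed graph with
vertices `V`, edges `E`, source `s` and range `r`; `es v` is the (finite) set
of edges emitted by `v` (so the graph is row-finite). -/
structure CKFamily (V E : Type*) (s r : E → V) (es : V → Finset E)
    (R : Type*) [NonUnitalCStarAlgebra R] where
  P : V → R
  S : E → R
  hes : ∀ v e, e ∈ es v ↔ s e = v
  P_sa : ∀ v, star (P v) = P v
  P_idem : ∀ v, P v * P v = P v
  P_orth : ∀ v w, v ≠ w → P v * P w = 0
  S_star : ∀ e, star (S e) * S e = P (r e)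
  CK : ∀ v, (es v).Nonempty → P v = ∑ e ∈ es v, S e * star (S e)

/-- `R` is (a realization of) the graph C*-algebra `C*(E)`: it carries a
Cuntz–Krieger `E`-family with non-zero vertex projections which generates `R`
and is universal among Cuntz–Krieger `E`-families. -/
structure GraphCStarAlgebra (V E : Type*) (s r : E → V) (es : V → Finset E)
    (R : Type*) [NonUnitalCStarAlgebra R] extends CKFamily V E s r es R where
  P_ne : ∀ v, P v ≠ 0
  generates : closure (↑(NonUnitalStarAlgebra.adjoin ℂ
    (Set.range P ∪ Set.range S) : NonUnitalStarSubalgebra ℂ R) : Set R) = Set.univ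
  universal : ∀ (B : Type) [NonUnitalCStarAlgebra B] (f : CKFamily V E s r es B),
    ∃ φ : R →⋆ₙₐ[ℂ] B, (∀ v, φ (P v) = f.P v) ∧ (∀ e, φ (S e) = f.S e)

/-- `B` realizes the stabilization `A ⊗ K`, witnessed by a system of maps
`φ i j : A → B` corresponding to the matrix-unit corners `e i j ⊗ A`. -/
structure IsStabilizationOf (A : Type*) [NonUnitalCStarAlgebra A]
    (B : Type*) [NonUnitalCStarAlgebra B] (φ : ℕ → ℕ → A → B) : Prop where
  linear : ∀ i j, IsLinearMap ℂ (φ i j)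
  mul : ∀ i j k l x y, φ i j x * φ k l y = if j = k then φ i l (x * y) else 0
  star_map : ∀ i j x, star (φ i j x) = φ j i (star x)
  isometry : ∀ i j x, ‖φ i j x‖ = ‖x‖
  dense : closure (↑(Submodule.span ℂ {b : B | ∃ i j x, b = φ i j x}) : Set B)
    = Set.univ

/-- A C*-algebra is stable (`C ≅ C ⊗ K`). -/
def IsStable (C : Type*) [NonUnitalCStarAlgebra C] : Prop :=
  ∃ ψ : ℕ → ℕ → C → C, IsStabilizationOf C C ψ

/-- A set of vertices is hereditary: it is closed under following edges. -/
def Hereditary {V E : Type*} (s r : E → V) (H : Set V) : Prop :=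
  ∀ e : E, s e ∈ H → r e ∈ H

/-- A set of vertices is saturated: a vertex emitting at least one edge, all
of whose emitted edges end in `H`, belongs to `H`. -/
def Saturated {V E : Type*} (s r : E → V) (es : V → Finset E) (H : Set V) : Prop :=
  ∀ v : V, (es v).Nonempty → (∀ e ∈ es v, r e ∈ H) → v ∈ H

/-- A projection is properly infinite: `p ≠ 0` and `p ⊕ p ≲ p` in `M₂`. -/
def ProperlyInfinite {R : Type*} [NonUnitalCStarAlgebra R] (p : R) : Prop :=
  p ≠ 0 ∧ CuntzSub (Matrix.diagonal ![p, p] : Matrix (Fin 2) (Fin 2) R)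
    (Matrix.diagonal ![p, 0])

theorem sum_mul_eq_self {R ι : Type*} [NonUnitalRing R] [Fintype ι] {c : ι → R}
    (horth : Pairwise fun i j => c i * c j = 0) {j : ι} {x : R} (hx : c j * x = x) :
    (∑ i, c i) * x = x := by
  rw [Finset.sum_mul, Finset.sum_eq_single j (fun i _ hij => ?_) (by simp), hx]
  rw [← hx, ← mul_assoc, horth hij, zero_mul]

section StarRing

variable {R : Type*} [NonUnitalRing R] [StarRing R]

/-- Exact witnesses of `p ⊕ p ≲ p`. -/
def HasTwoOrthogonalCopies (p : R) : Prop :=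
  ∃ t₁ t₂ : R, star t₁ * t₁ = p ∧ star t₂ * t₂ = p ∧ star t₁ * t₂ = 0 ∧ p * t₁ = t₁ ∧ p * t₂ = t₂

structure IsOrthogonalSeq (p : R) (w : ℕ → R) : Prop where
  star_mul_self : ∀ i, star (w i) * w i = p
  star_mul_of_ne : Pairwise fun i j => star (w i) * w j = 0
  mul_left : ∀ i, p * w i = w i

def MvNSubequiv (p q : R) : Prop :=
  ∃ τ : R, star τ * τ = p ∧ q * τ = τ

theorem star_mul_eq_zero_of_mul_eq_zero {p q x y : R} (hp : star p = p) (hpq : p * q = 0)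
    (hx : p * x = x) (hy : q * y = y) : star x * y = 0 :=
  calc star x * y = star (p * x) * (q * y) := by rw [hx, hy]
    _ = star x * (p * q) * y := by rw [star_mul, hp]; noncomm_ring
    _ = 0 := by rw [hpq, mul_zero, zero_mul]

namespace HasTwoOrthogonalCopies

theorem mul_star_self {p x : R} (hp : HasTwoOrthogonalCopies p) (hx : star x * x = p)
    (hxp : x * p = x) : HasTwoOrthogonalCopies (x * star x) := by
  obtain ⟨t₁, t₂, h₁, h₂, h₁₂, hp₁, hp₂⟩ := hp
  have conj_mul : ∀ t u : R, p * u = u →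
      star (x * t * star x) * (x * u * star x) = x * (star t * u) * star x := by
    intro t u hu
    calc star (x * t * star x) * (x * u * star x) = x * star t * ((star x * x) * u) * star x := by
          simp only [star_mul, star_star]; noncomm_ring
      _ = x * (star t * u) * star x := by rw [hx, hu]; noncomm_ring
  have mul_conj : ∀ t : R, p * t = t → x * star x * (x * t * star x) = x * t * star x := by
    intro t ht
    calc x * star x * (x * t * star x) = x * ((star x * x) * t) * star x := by noncomm_ring
      _ = x * t * star x := by rw [hx, ht]
  refine ⟨x * t₁ * star x, x * t₂ * star x, ?_, ?_, ?_, mul_conj t₁ hp₁, mul_conj t₂ hp₂⟩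
  · rw [conj_mul t₁ t₁ hp₁, h₁, hxp]
  · rw [conj_mul t₂ t₂ hp₂, h₂, hxp]
  · rw [conj_mul t₁ t₂ hp₂, h₁₂, mul_zero, zero_mul]

theorem exists_isOrthogonalSeq {p : R} (hp : HasTwoOrthogonalCopies p) :
    ∃ w, IsOrthogonalSeq p w := by
  obtain ⟨t₁, t₂, h₁, h₂, h₁₂, hp₁, hp₂⟩ := hp
  let w : ℕ → R := fun i => (t₂ * ·)^[i] t₁
  have w_succ : ∀ i, w (i + 1) = t₂ * w i := fun i => Function.iterate_succ_apply' _ i t₁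
  have hfix : ∀ i, p * w i = w i := by
    intro i
    induction i with
    | zero => exact hp₁
    | succ i ih => rw [w_succ, ← mul_assoc, hp₂]
  have shift : ∀ i j, star (w (i + 1)) * w (j + 1) = star (w i) * w j := by
    intro i j
    rw [w_succ, w_succ, star_mul, mul_assoc, ← mul_assoc (star t₂), h₂, hfix]
  have orth_zero : ∀ j, star (w 0) * w (j + 1) = 0 := by
    intro j
    rw [w_succ, ← mul_assoc]
    exact (congrArg (· * w j) h₁₂).trans (zero_mul _)
  refine ⟨w, ⟨fun i => ?_, fun i j hij => ?_, hfix⟩⟩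
  · induction i with
    | zero => exact h₁
    | succ i ih => rw [shift, ih]
  · induction i generalizing j with
    | zero =>
      obtain ⟨j, rfl⟩ := Nat.exists_eq_succ_of_ne_zero (Ne.symm hij)
      exact orth_zero j
    | succ i ih =>
      cases j with
      | zero => simpa using congrArg star (orth_zero i)
      | succ j => rw [shift, ih j (by omega)]

theorem of_sum {ι : Type*} [Fintype ι] {p : R} {c : ι → R} (hsum : ∑ i, c i = p)
    (hsa : ∀ i, star (c i) = c i) (horth : Pairwise fun i j => c i * c j = 0)
    (habsorb : ∀ i, ∃ j, HasTwoOrthogonalCopies (c j) ∧ MvNSubequiv (c i) (c j)) :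
    HasTwoOrthogonalCopies p := by
  classical
  choose j hj τ hτ hjτ using habsorb
  have seq : ∀ k, ∃ w, HasTwoOrthogonalCopies (c k) → IsOrthogonalSeq (c k) w := fun k =>
    if hk : HasTwoOrthogonalCopies (c k) then
      (hk.exists_isOrthogonalSeq).imp fun _ hw _ => hw
    else ⟨0, fun h => (hk h).elim⟩
  choose w hw using seq
  obtain ⟨slot, hslot⟩ := Countable.exists_injective_nat (Fin 2 × ι)
  -- the `k`-th copy of `c i` is built from copy number `slot (k, i)` of its absorber `c (j i)`
  let a : Fin 2 → ι → R := fun k i => w (j i) (slot (k, i)) * τ i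
  have star_a_mul_a : ∀ k i k' i',
      star (a k i) * a k' i' = if (k, i) = (k', i') then c i else 0 := by
    intro k i k' i'
    have expand : star (a k i) * a k' i' =
        star (τ i) * (star (w (j i) (slot (k, i))) * w (j i') (slot (k', i'))) * τ i' := by
      simp only [a, star_mul]; noncomm_ring
    rw [expand]
    split_ifs with h
    · obtain ⟨rfl, rfl⟩ := Prod.mk.inj h
      rw [(hw _ (hj i)).star_mul_self, ← hsa, ← star_mul, hjτ, hτ]
    · by_cases hjj : j i = j i'
      · rw [← hjj, (hw _ (hj i)).star_mul_of_ne (hslot.ne h), mul_zero, zero_mul]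
      · rw [star_mul_eq_zero_of_mul_eq_zero (hsa _) (horth hjj) ((hw _ (hj i)).mul_left _)
          ((hw _ (hj i')).mul_left _), mul_zero, zero_mul]
  let t : Fin 2 → R := fun k => ∑ i, a k i
  have star_t_mul_t : ∀ k k', star (t k) * t k' = if k = k' then p else 0 := by
    intro k k'
    simp only [t, star_sum, Finset.sum_mul_sum, star_a_mul_a]
    split_ifs with hk
    · subst hk
      simp [hsum]
    · simp [hk]
  have p_mul_t : ∀ k, p * t k = t k := fun k => by
    refine Finset.mul_sum _ _ _ |>.trans (Finset.sum_congr rfl fun i _ => ?_)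
    rw [← hsum, sum_mul_eq_self horth (x := a k i) (j := j i)]
    rw [← mul_assoc, (hw _ (hj i)).mul_left]
  refine ⟨t 0, t 1, ?_, ?_, ?_, p_mul_t 0, p_mul_t 1⟩ <;> simp [star_t_mul_t]

end HasTwoOrthogonalCopies

end StarRing

theorem HasTwoOrthogonalCopies.properlyInfinite {R : Type*} [NonUnitalCStarAlgebra R] {p : R}
    (hp : HasTwoOrthogonalCopies p) (hp0 : p ≠ 0) : ProperlyInfinite p := by
  obtain ⟨t₁, t₂, h₁, h₂, h₁₂, hp₁, hp₂⟩ := hp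
  have h₂₁ : star t₂ * t₁ = 0 := by simpa using congrArg star h₁₂
  let M : Matrix (Fin 2) (Fin 2) R := Matrix.of ![![star t₁, 0], ![star t₂, 0]]
  have hM : M * Matrix.diagonal ![p, 0] * star M = Matrix.diagonal ![p, p] := by
    ext i k
    fin_cases i <;> fin_cases k <;>
      simp [M, Matrix.mul_apply, Matrix.vecMul_diagonal, Fin.sum_univ_two, Matrix.star_apply,
        mul_assoc, hp₁, hp₂, h₁, h₂, h₁₂, h₂₁]
  exact ⟨hp0, fun _ => M, by simp only [hM]; exact tendsto_const_nhds⟩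

section CStarRing

variable {R : Type*} [NonUnitalCStarAlgebra R]

theorem eq_zero_of_sum_star_mul_self_eq_zero {ι : Type*} {s : Finset ι} {x : ι → R}
    (h : ∑ i ∈ s, star (x i) * x i = 0) {i : ι} (hi : i ∈ s) : x i = 0 := by
  let _ := CStarAlgebra.spectralOrder R
  have _ := CStarAlgebra.spectralOrderedRing R
  rw [← CStarRing.star_mul_self_eq_zero_iff]
  exact (Finset.sum_eq_zero_iff_of_nonneg fun j _ => star_mul_self_nonneg (x j)).mp h i hi

theorem mul_star_mul_self_of_isIdempotentElem {x : R} (hx : IsIdempotentElem (star x * x)) :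
    x * (star x * x) = x := by
  rw [← sub_eq_zero, ← CStarRing.star_mul_self_eq_zero_iff]
  calc star (x * (star x * x) - x) * (x * (star x * x) - x)
      = (star x * x) * (star x * x) * (star x * x) - (star x * x) * (star x * x)
        - (star x * x) * (star x * x) + star x * x := by
        simp only [star_sub, star_mul, star_star]; noncomm_ring
    _ = 0 := by rw [hx.eq, hx.eq]; abel

variable {ι : Type*} {s : Finset ι} {x : ι → R} {p : R}

theorem mul_eq_self_of_sum_mul_star_eq (hpsa : star p = p) (hp : IsIdempotentElem p)
    (hsum : ∑ i ∈ s, x i * star (x i) = p) {i : ι} (hi : i ∈ s) : p * x i = x i := by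
  have hy := eq_zero_of_sum_star_mul_self_eq_zero
    (x := fun i => star (x i) - star (x i) * p) ?_ hi
  · exact (sub_eq_zero.1 (by simpa [hpsa] using congrArg star hy)).symm
  calc ∑ i ∈ s, star (star (x i) - star (x i) * p) * (star (x i) - star (x i) * p)
      = ∑ i ∈ s, (x i * star (x i) - x i * star (x i) * p - p * (x i * star (x i))
          + p * (x i * star (x i)) * p) := by
        refine Finset.sum_congr rfl fun i _ => ?_
        simp only [star_sub, star_mul, star_star, hpsa]; noncomm_ring
    _ = p - p * p - p * p + p * p * p := by
        simp only [Finset.sum_add_distrib, Finset.sum_sub_distrib, ← Finset.sum_mul,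
          ← Finset.mul_sum, hsum]
    _ = 0 := by rw [hp.eq, hp.eq]; abel

theorem star_mul_eq_zero_of_sum_mul_star_eq (hpsa : star p = p) (hp : IsIdempotentElem p)
    (hsum : ∑ i ∈ s, x i * star (x i) = p) {i j : ι} (hi : i ∈ s) (hj : j ∈ s) (hij : i ≠ j)
    (hq : IsIdempotentElem (star (x j) * x j)) : star (x i) * x j = 0 := by
  classical
  have hqsa : star (star (x j) * x j) = star (x j) * x j := by simp
  have htotal : ∑ k ∈ s, star (star (x k) * x j) * (star (x k) * x j) = star (x j) * x j := by
    calc ∑ k ∈ s, star (star (x k) * x j) * (star (x k) * x j)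
        = star (x j) * (∑ k ∈ s, x k * star (x k)) * x j := by
          simp only [Finset.mul_sum, Finset.sum_mul, star_mul, star_star, mul_assoc]
      _ = star (x j) * x j := by
          rw [hsum, mul_assoc, mul_eq_self_of_sum_mul_star_eq hpsa hp hsum hj]
  rw [← Finset.add_sum_erase s _ hj, hqsa, hq.eq, add_eq_left] at htotal
  exact eq_zero_of_sum_star_mul_self_eq_zero htotal (Finset.mem_erase.2 ⟨hij, hi⟩)

end CStarRing

section Graph

variable {V E : Type*} {s r : E → V} {es : V → Finset E}

theorem IsPathFrom.append {u v w : V} {l m : List E} (h₁ : IsPathFrom s r u v l)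
    (h₂ : IsPathFrom s r v w m) : IsPathFrom s r u w (l ++ m) := by
  induction l generalizing u with
  | nil => exact (show u = v from h₁) ▸ h₂
  | cons e l ih => exact ⟨h₁.1, ih h₁.2⟩

theorem IsPathFrom.of_append {u w : V} {l m : List E} (h : IsPathFrom s r u w (l ++ m)) :
    ∃ v, IsPathFrom s r u v l ∧ IsPathFrom s r v w m := by
  induction l generalizing u with
  | nil => exact ⟨u, rfl, h⟩
  | cons e l ih =>
    obtain ⟨v, hl, hm⟩ := ih h.2
    exact ⟨v, ⟨h.1, hl⟩, hm⟩

def Reaches (s r : E → V) (u w : V) : Prop :=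
  ∃ l, IsPathFrom s r u w l

theorem Reaches.refl (u : V) : Reaches s r u u :=
  ⟨[], rfl⟩

theorem Reaches.trans {u v w : V} (h₁ : Reaches s r u v) (h₂ : Reaches s r v w) :
    Reaches s r u w :=
  let ⟨l, hl⟩ := h₁
  let ⟨m, hm⟩ := h₂
  ⟨l ++ m, hl.append hm⟩

def OnCycle (s r : E → V) (x : V) : Prop :=
  ∃ c ≠ [], IsPathFrom s r x x c

theorem OnCycle.exists_edge {x : V} (hx : OnCycle s r x) :
    ∃ e, s e = x ∧ OnCycle s r (r e) ∧ Reaches s r (r e) x := by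
  obtain ⟨_ | ⟨e, c⟩, hc, hpath⟩ := hx
  · exact absurd rfl hc
  · exact ⟨e, hpath.1, ⟨c ++ [e], by simp, hpath.2.append ⟨hpath.1, rfl⟩⟩, ⟨c, hpath.2⟩⟩

theorem Reaches.exists_edge {u x : V} (hu : Reaches s r u x) (hx : OnCycle s r x) :
    ∃ e, s e = u ∧ Reaches s r (r e) x := by
  obtain ⟨_ | ⟨e, l⟩, hl⟩ := hu
  · obtain ⟨e, he, -, hex⟩ := hx.exists_edge
    exact ⟨e, he.trans (show u = x from hl).symm, hex⟩
  · exact ⟨e, hl.1, l, hl.2⟩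

def ConnectsToCyclesWithExits (s r : E → V) (es : V → Finset E) : Prop :=
  ∀ H : Set V, Hereditary s r H → Saturated s r es H →
      ∀ v : V, v ∉ H →
        ∃ (w : V) (l : List E), IsPathFrom s r v w l ∧
          (∀ e ∈ l, s e ∉ H ∧ r e ∉ H) ∧ w ∉ H ∧
          ∃ lc : List E, lc ≠ [] ∧ IsPathFrom s r w w lc ∧
            (∀ e ∈ lc, s e ∉ H ∧ r e ∉ H) ∧
            ∃ e ∈ lc, ∃ e' : E, s e' = s e ∧ e' ≠ e ∧ r e' ∉ H

theorem ConnectsToCyclesWithExits.exists_onCycle (hconn : ConnectsToCyclesWithExits s r es)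
    {H : Set V} (hH : Hereditary s r H) (hS : Saturated s r es H) {v : V} (hv : v ∉ H) :
    ∃ w, w ∉ H ∧ Reaches s r v w ∧ OnCycle s r w := by
  obtain ⟨w, l, hl, -, hw, c, hc, hcw, -⟩ := hconn H hH hS v hv
  exact ⟨w, hw, ⟨l, hl⟩, c, hc, hcw⟩

theorem OnCycle.exists_fork (hes : ∀ v e, e ∈ es v ↔ s e = v)
    (hconn : ConnectsToCyclesWithExits s r es) {x : V} (hx : OnCycle s r x) :
    ∃ (a t₁ t₂ : List E) (e₁ e₂ : E), e₁ ≠ e₂ ∧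
      IsPathFrom s r x x (a ++ e₁ :: t₁) ∧ IsPathFrom s r x x (a ++ e₂ :: t₂) := by
  have hH : Hereditary s r {u | ¬ Reaches s r u x} := fun e hse hre =>
    hse (Reaches.trans ⟨[e], rfl, rfl⟩ hre)
  have hS : Saturated s r es {u | ¬ Reaches s r u x} := fun u _ hall hu => by
    obtain ⟨e, he, hex⟩ := hu.exists_edge hx
    exact hall e ((hes u e).2 he) hex
  obtain ⟨w, l, hl, -, -, c, -, hc, hcH, e, hec, e', hse', hne, he'⟩ :=
    hconn _ hH hS x (fun h => h (Reaches.refl x))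
  obtain ⟨c₁, c₂, rfl⟩ := List.append_of_mem hec
  obtain ⟨y, hc₁, hc₂⟩ := hc.of_append
  obtain ⟨q₁, hq₁⟩ := not_not.1 (hcH e hec).2
  obtain ⟨q₂, hq₂⟩ := not_not.1 he'
  refine ⟨l ++ c₁, q₁, q₂, e, e', hne.symm, ?_, ?_⟩ <;>
    rw [List.append_assoc] <;> refine hl.append (hc₁.append ?_)
  · exact ⟨hc₂.1, hq₁⟩
  · exact ⟨hse'.trans hc₂.1, hq₂⟩

def belowCycles (s r : E → V) (v : V) (n : ℕ) : Set V :=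
  {u | ∃ x π, IsPathFrom s r v x π ∧ π.length = n ∧ OnCycle s r x ∧ Reaches s r x u}

theorem belowCycles_mono (v : V) : Monotone (belowCycles s r v) := by
  refine monotone_nat_of_le_succ fun n u ⟨x, π, hπ, hlen, hx, hxu⟩ => ?_
  obtain ⟨e, he, hre, hrex⟩ := hx.exists_edge
  exact ⟨r e, π ++ [e], hπ.append ⟨he, rfl⟩, by simp [hlen], hre, hrex.trans hxu⟩

def LongPathsEndBelowCycles (s r : E → V) (v u : V) (n : ℕ) : Prop :=
  ∀ w l, IsPathFrom s r u w l → n ≤ l.length → w ∈ belowCycles s r v n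

theorem LongPathsEndBelowCycles.mono {v u : V} {n m : ℕ}
    (h : LongPathsEndBelowCycles s r v u n) (hnm : n ≤ m) : LongPathsEndBelowCycles s r v u m :=
  fun w l hl hlen => belowCycles_mono v hnm (h w l hl (hnm.trans hlen))

def eventuallyBelowCycles (s r : E → V) (v : V) : Set V :=
  {u | ∃ n, LongPathsEndBelowCycles s r v u n}

theorem hereditary_eventuallyBelowCycles (v : V) :
    Hereditary s r (eventuallyBelowCycles s r v) := by
  rintro e ⟨n, hn⟩
  exact ⟨n, fun w l hl hlen => hn w (e :: l) ⟨rfl, hl⟩ (hlen.trans (Nat.le_succ _))⟩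

theorem saturated_eventuallyBelowCycles (hes : ∀ v e, e ∈ es v ↔ s e = v) (v : V) :
    Saturated s r es (eventuallyBelowCycles s r v) := by
  intro u _ hall
  obtain ⟨N, hN⟩ := ((Filter.eventually_all_finset _).2 fun e he =>
    let ⟨n, hn⟩ := hall e he
    Filter.eventually_atTop.2 ⟨n, fun _ hm => hn.mono hm⟩).exists
  refine ⟨N + 1, fun w l hl hlen => ?_⟩
  obtain _ | ⟨e, t⟩ := l
  · simp at hlen
  · exact belowCycles_mono v (Nat.le_succ N)
      (hN e ((hes u e).2 hl.1) w t hl.2 (by simpa using hlen))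

theorem exists_forall_mem_belowCycles (hes : ∀ v e, e ∈ es v ↔ s e = v) {v : V}
    (hcyc : ∀ H : Set V, Hereditary s r H → Saturated s r es H → v ∉ H →
      ∃ w, w ∉ H ∧ Reaches s r v w ∧ OnCycle s r w) :
    ∃ n, ∀ w l, IsPathFrom s r v w l → l.length = n → w ∈ belowCycles s r v n := by
  obtain ⟨n, hn⟩ : v ∈ eventuallyBelowCycles s r v := by
    by_contra hv
    obtain ⟨w, hw, ⟨l, hl⟩, hwc⟩ := hcyc _ (hereditary_eventuallyBelowCycles v)
      (saturated_eventuallyBelowCycles hes v) hv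
    exact hw ⟨l.length, fun u m hm _ => ⟨w, l, hl, rfl, hwc, m, hm⟩⟩
  exact ⟨n, fun w l hl hlen => hn w l hl hlen.ge⟩

def paths (r : E → V) (es : V → Finset E) : ℕ → V → Finset (List E)
  | 0, _ => {[]}
  | n + 1, v => ((es v).sigma fun e => paths r es n (r e)).map
      ⟨fun el => el.1 :: el.2, fun ⟨_, _⟩ ⟨_, _⟩ h => by cases h; rfl⟩

theorem mem_paths (hes : ∀ v e, e ∈ es v ↔ s e = v) {n : ℕ} {v : V} {l : List E} :
    l ∈ paths r es n v ↔ l.length = n ∧ ∃ w, IsPathFrom s r v w l := by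
  induction n generalizing v l with
  | zero =>
    simp only [paths, Finset.mem_singleton, List.length_eq_zero_iff, iff_self_and]
    rintro rfl
    exact ⟨v, rfl⟩
  | succ n ih =>
    obtain _ | ⟨e, l⟩ := l
    · simp [paths]
    · simp only [paths, Finset.mem_map, Finset.mem_sigma, Sigma.exists, ih, hes]
      change (∃ a b, _ ∧ a :: b = e :: l) ↔ _
      simp [IsPathFrom, and_left_comm]

end Graph

namespace CKFamily

variable {V E : Type*} {s r : E → V} {es : V → Finset E} {R : Type*} [NonUnitalCStarAlgebra R]
  (f : CKFamily V E s r es R)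

theorem S_mul_P (e : E) : f.S e * f.P (r e) = f.S e := by
  have h := mul_star_mul_self_of_isIdempotentElem (x := f.S e) (by rw [f.S_star]; exact f.P_idem _)
  rwa [f.S_star] at h

theorem P_mul_S (e : E) : f.P (s e) * f.S e = f.S e :=
  have he : e ∈ es (s e) := (f.hes _ e).2 rfl
  mul_eq_self_of_sum_mul_star_eq (f.P_sa _) (f.P_idem _) (f.CK _ ⟨e, he⟩).symm he

theorem star_S_mul_S_of_ne {e e' : E} (h : e ≠ e') : star (f.S e) * f.S e' = 0 := by
  by_cases hs : s e = s e'
  · have he : e ∈ es (s e') := (f.hes _ e).2 hs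
    exact star_mul_eq_zero_of_sum_mul_star_eq (f.P_sa _) (f.P_idem _) (f.CK _ ⟨e, he⟩).symm
      he ((f.hes _ e').2 rfl) h (by rw [f.S_star]; exact f.P_idem _)
  · calc star (f.S e) * f.S e' = star (f.P (s e) * f.S e) * (f.P (s e') * f.S e') := by
          rw [f.P_mul_S, f.P_mul_S]
      _ = star (f.S e) * (f.P (s e) * f.P (s e')) * f.S e' := by
          rw [star_mul, f.P_sa]; noncomm_ring
      _ = 0 := by rw [f.P_orth _ _ hs, mul_zero, zero_mul]

/-- `pathS v μ = S_μ`, with `S_[] = P v`. -/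
def pathS : V → List E → R
  | v, [] => f.P v
  | _, e :: l => f.S e * pathS (r e) l

def pathProj (v : V) (l : List E) : R :=
  f.pathS v l * star (f.pathS v l)

variable {f}

theorem P_mul_pathS {v w : V} {l : List E} (h : IsPathFrom s r v w l) :
    f.P v * f.pathS v l = f.pathS v l := by
  cases l with
  | nil => exact f.P_idem v
  | cons e l => rw [pathS, ← mul_assoc, ← h.1, f.P_mul_S]

theorem pathS_mul_P {v w : V} {l : List E} (h : IsPathFrom s r v w l) :
    f.pathS v l * f.P w = f.pathS v l := by
  induction l generalizing v with
  | nil => rw [show v = w from h]; exact f.P_idem w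
  | cons e l ih => rw [pathS, mul_assoc, ih h.2]

theorem star_pathS_mul_pathS {v w : V} {l : List E} (h : IsPathFrom s r v w l) :
    star (f.pathS v l) * f.pathS v l = f.P w := by
  induction l generalizing v with
  | nil => rw [show v = w from h, pathS, f.P_sa, f.P_idem]
  | cons e l ih =>
    rw [pathS, star_mul, mul_assoc, ← mul_assoc (star (f.S e)), f.S_star, P_mul_pathS h.2, ih h.2]

theorem star_pathS_mul_pathS_eq_zero {v w : V} {l₁ l₂ : List E} (h₂ : IsPathFrom s r v w l₂)
    (h₁₂ : ¬ l₁ <+: l₂) (h₂₁ : ¬ l₂ <+: l₁) : star (f.pathS v l₁) * f.pathS v l₂ = 0 := by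
  induction l₁ generalizing v l₂ with
  | nil => exact absurd List.nil_prefix h₁₂
  | cons e l₁ ih =>
    obtain _ | ⟨e', l₂⟩ := l₂
    · exact absurd List.nil_prefix h₂₁
    rw [pathS, pathS, star_mul, mul_assoc, ← mul_assoc (star (f.S e))]
    by_cases he : e = e'
    · subst he
      simp only [List.cons_prefix_cons, true_and] at h₁₂ h₂₁
      rw [f.S_star, P_mul_pathS h₂.2, ih h₂.2 h₁₂ h₂₁]
    · rw [f.star_S_mul_S_of_ne he, zero_mul, mul_zero]

theorem pathProj_cons (v : V) (e : E) (l : List E) :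
    f.pathProj v (e :: l) = f.S e * f.pathProj (r e) l * star (f.S e) := by
  simp only [pathProj, pathS, star_mul, mul_assoc]

variable (f) in
theorem sum_pathProj (hnosink : ∀ v, (es v).Nonempty) (n : ℕ) (v : V) :
    ∑ l ∈ paths r es n v, f.pathProj v l = f.P v := by
  induction n generalizing v with
  | zero => simp [paths, pathProj, pathS, f.P_sa, f.P_idem]
  | succ n ih =>
    rw [paths, Finset.sum_map, Finset.sum_sigma, f.CK v (hnosink v)]
    refine Finset.sum_congr rfl fun e _ => ?_
    change ∑ l ∈ paths r es n (r e), f.pathProj v (e :: l) = _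
    simp only [pathProj_cons, ← Finset.sum_mul, ← Finset.mul_sum, ih, f.S_mul_P]

theorem star_pathProj (v : V) (l : List E) : star (f.pathProj v l) = f.pathProj v l := by
  simp [pathProj]

theorem pathProj_mul_pathProj_of_ne (hes : ∀ v e, e ∈ es v ↔ s e = v) {n : ℕ} {v : V}
    {l₁ l₂ : List E} (h₁ : l₁ ∈ paths r es n v) (h₂ : l₂ ∈ paths r es n v) (hne : l₁ ≠ l₂) :
    f.pathProj v l₁ * f.pathProj v l₂ = 0 := by
  obtain ⟨hlen₁, -⟩ := (mem_paths hes).1 h₁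
  obtain ⟨hlen₂, w, hw⟩ := (mem_paths hes).1 h₂
  have hlen : l₁.length = l₂.length := hlen₁.trans hlen₂.symm
  have hzero := star_pathS_mul_pathS_eq_zero (f := f) hw (fun h => hne (h.eq_of_length hlen))
    (fun h => hne (h.eq_of_length hlen.symm).symm)
  rw [pathProj, pathProj, mul_assoc, ← mul_assoc (star _), hzero, zero_mul, mul_zero]

theorem hasTwoOrthogonalCopies_P_of_onCycle (hconn : ConnectsToCyclesWithExits s r es) {x : V}
    (hx : OnCycle s r x) : HasTwoOrthogonalCopies (f.P x) := by
  obtain ⟨a, t₁, t₂, e₁, e₂, hne, h₁, h₂⟩ := hx.exists_fork f.hes hconn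
  have not_prefix : ∀ {e e' : E} (t t' : List E), e ≠ e' → ¬ a ++ e :: t <+: a ++ e' :: t' := by
    intro e e' t t' h hp
    rw [List.prefix_append_right_inj, List.cons_prefix_cons] at hp
    exact h hp.1
  exact ⟨f.pathS x (a ++ e₁ :: t₁), f.pathS x (a ++ e₂ :: t₂), star_pathS_mul_pathS h₁,
    star_pathS_mul_pathS h₂,
    star_pathS_mul_pathS_eq_zero h₂ (not_prefix _ _ hne) (not_prefix _ _ hne.symm),
    P_mul_pathS h₁, P_mul_pathS h₂⟩

theorem hasTwoOrthogonalCopies_pathProj {v x : V} {π : List E} (hπ : IsPathFrom s r v x π)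
    (hx : HasTwoOrthogonalCopies (f.P x)) : HasTwoOrthogonalCopies (f.pathProj v π) :=
  hx.mul_star_self (star_pathS_mul_pathS hπ) (pathS_mul_P hπ)

theorem mvnSubequiv_pathProj {v x w : V} {π ρ l : List E} (hπ : IsPathFrom s r v x π)
    (hρ : IsPathFrom s r x w ρ) (hl : IsPathFrom s r v w l) :
    MvNSubequiv (f.pathProj v l) (f.pathProj v π) := by
  set Sπ := f.pathS v π
  set Sρ := f.pathS x ρ
  set Sl := f.pathS v l
  refine ⟨Sπ * Sρ * star Sl, ?_, ?_⟩
  · calc star (Sπ * Sρ * star Sl) * (Sπ * Sρ * star Sl)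
        = Sl * (star Sρ * ((star Sπ * Sπ) * Sρ)) * star Sl := by
          simp only [star_mul, star_star]; noncomm_ring
      _ = f.pathProj v l := by
          rw [star_pathS_mul_pathS hπ, P_mul_pathS hρ, star_pathS_mul_pathS hρ, pathS_mul_P hl,
            pathProj]
  · calc f.pathProj v π * (Sπ * Sρ * star Sl) = Sπ * (star Sπ * Sπ) * Sρ * star Sl := by
          rw [pathProj]; noncomm_ring
      _ = Sπ * Sρ * star Sl := by rw [star_pathS_mul_pathS hπ, pathS_mul_P hπ]

variable (f) in
theorem hasTwoOrthogonalCopies_P (hnosink : ∀ v, (es v).Nonempty)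
    (hconn : ConnectsToCyclesWithExits s r es) (v : V) : HasTwoOrthogonalCopies (f.P v) := by
  obtain ⟨n, hn⟩ := exists_forall_mem_belowCycles f.hes fun _ hH hS hv =>
    hconn.exists_onCycle hH hS hv
  refine HasTwoOrthogonalCopies.of_sum (c := fun l : paths r es n v => f.pathProj v l) ?_
    (fun l => star_pathProj _ _) ?_ ?_
  · rw [Finset.sum_coe_sort (paths r es n v) (f.pathProj v)]
    exact f.sum_pathProj hnosink n v
  · exact fun l₁ l₂ hne => pathProj_mul_pathProj_of_ne f.hes l₁.2 l₂.2 (Subtype.coe_ne_coe.2 hne)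
  · rintro ⟨l, hl⟩
    obtain ⟨hlen, w, hw⟩ := (mem_paths f.hes).1 hl
    obtain ⟨x, π, hπ, hπlen, hx, ρ, hρ⟩ := hn w l hw hlen
    exact ⟨⟨π, (mem_paths f.hes).2 ⟨hπlen, x, hπ⟩⟩,
      hasTwoOrthogonalCopies_pathProj hπ (hasTwoOrthogonalCopies_P_of_onCycle hconn hx),
      mvnSubequiv_pathProj hπ hρ hw⟩

end CKFamily

theorem stmt13_general {V E : Type*}
    (s r : E → V) (es : V → Finset E)
    (hnosink : ∀ v : V, (es v).Nonempty)
    {R : Type*} [NonUnitalCStarAlgebra R]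
    (f : GraphCStarAlgebra V E s r es R)
    (hconn : ∀ H : Set V, Hereditary s r H → Saturated s r es H →
      ∀ v : V, v ∉ H →
        ∃ (w : V) (l : List E), IsPathFrom s r v w l ∧
          (∀ e ∈ l, s e ∉ H ∧ r e ∉ H) ∧ w ∉ H ∧
          ∃ lc : List E, lc ≠ [] ∧ IsPathFrom s r w w lc ∧
            (∀ e ∈ lc, s e ∉ H ∧ r e ∉ H) ∧
            ∃ e ∈ lc, ∃ e' : E, s e' = s e ∧ e' ≠ e ∧ r e' ∉ H) :
    ∀ v : V, ProperlyInfinite (f.P v) :=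
  fun v => (f.hasTwoOrthogonalCopies_P hnosink hconn v).properlyInfinite (f.P_ne v)

/-- let `E` be a locally finite directed graph with no sinks
such that in every subgraph complementary to a hereditary saturated vertex set
`H`, every vertex connects to a cycle with an exit.  Then every vertex
projection `P v ∈ C*(E)` is properly infinite. -/
theorem stmt13 {V E : Type*} [Countable V] [Countable E]
    (s r : E → V) (es : V → Finset E)
    (hrfin : ∀ v : V, {e : E | r e = v}.Finite)
    (hnosink : ∀ v : V, (es v).Nonempty)
    {R : Type*} [NonUnitalCStarAlgebra R]
    (f : GraphCStarAlgebra V E s r es R)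
    (hconn : ∀ H : Set V, Hereditary s r H → Saturated s r es H →
      ∀ v : V, v ∉ H →
        ∃ (w : V) (l : List E), IsPathFrom s r v w l ∧
          (∀ e ∈ l, s e ∉ H ∧ r e ∉ H) ∧ w ∉ H ∧
          ∃ lc : List E, lc ≠ [] ∧ IsPathFrom s r w w lc ∧
            (∀ e ∈ lc, s e ∉ H ∧ r e ∉ H) ∧
            ∃ e ∈ lc, ∃ e' : E, s e' = s e ∧ e' ≠ e ∧ r e' ∉ H) :
    ∀ v : V, ProperlyInfinite (f.P v) :=
  stmt13_general s r es hnosink f hconn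
end
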